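/- arXiv:quant-ph/0312157 — 3 statements merged into one kernel-verified Lean document; each statement's English description precedes it below -/
import Mathlib

section
/- (Quantum Representation Theorem, existence part) If a likelihood ordering on a weight-rich set of quantum measurements satisfies transitivity, dominance, separation, and equivalence, then the weight function represents the ordering: Pr(E|M) := W_M(E) satisfies Pr(∅|M)=0, Pr(S_M|M)=1, finite additivity on disjoint events, and Pr(E|M) ≥ Pr(F|N) if and only if E|M ≿ F|N. -/
/-- A quantum measurement: a finite outcome set with an additive,
normalized, nonnegative weight function on events (subsets of outcomes). -/
structure Measurement where
  S : Finset ℕ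
  W : Finset ℕ → ℝ
  nonneg : ∀ E, 0 ≤ W E
  emptyW : W ∅ = 0
  totalW : W S = 1
  addW : ∀ E F : Finset ℕ, E ⊆ S → F ⊆ S → Disjoint E F → W (E ∪ F) = W E + W F

/-- A likelihood ordering on event–measurement pairs. -/
abbrev LOrder := (Finset ℕ × Measurement) → (Finset ℕ × Measurement) → Prop

/-- E|M ≃ F|N : both directions of the likelihood ordering hold. -/
def lequiv (R : LOrder) (a b : Finset ℕ × Measurement) : Prop := R a b ∧ R b a

/-- E is null with respect to M. -/
def IsNull (R : LOrder) (E : Finset ℕ) (M : Measurement) : Prop := lequiv R (E, M) (∅, M)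

/-- Transitivity axiom. -/
def TransAx (R : LOrder) : Prop := ∀ a b c, R a b → R b c → R a c

/-- Dominance axiom. -/
def DominanceAx (R : LOrder) : Prop :=
  ∀ (M : Measurement) (E F : Finset ℕ), E ⊆ F → F ⊆ M.S →
    R (F, M) (E, M) ∧ (lequiv R (F, M) (E, M) ↔ IsNull R (F \ E) M)

/-- Separation axiom: some event is not null. -/
def SeparationAx (R : LOrder) : Prop :=
  ∃ (E : Finset ℕ) (M : Measurement), E ⊆ M.S ∧ ¬ IsNull R E M

/-- Equivalence axiom: equal weight implies equal likelihood. -/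
def EquivalenceAx (R : LOrder) : Prop :=
  ∀ (M N : Measurement) (E F : Finset ℕ), E ⊆ M.S → F ⊆ N.S →
    M.W E = N.W F → lequiv R (E, M) (F, N)

/-- Weight-richness: every finite list of positive reals summing to 1 is
realized as the singleton-outcome weights of some measurement. -/
def Rich : Prop :=
  ∀ (n : ℕ) (w : Fin n → ℝ), (∀ i, 0 < w i) → (∑ i, w i) = 1 →
    ∃ (M : Measurement) (e : Fin n ↪ ℕ),
      M.S = Finset.univ.map e ∧ ∀ i, M.W {e i} = w i

/-- `Pr` represents the likelihood ordering `R`. -/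
def Represents (R : LOrder) (Pr : Finset ℕ × Measurement → ℝ) : Prop :=
  (∀ M : Measurement, Pr (∅, M) = 0) ∧
  (∀ M : Measurement, Pr (M.S, M) = 1) ∧
  (∀ (M : Measurement) (E F : Finset ℕ), E ⊆ M.S → F ⊆ M.S → Disjoint E F →
      Pr (E ∪ F, M) = Pr (E, M) + Pr (F, M)) ∧
  (∀ a b : Finset ℕ × Measurement, a.1 ⊆ a.2.S → b.1 ⊆ b.2.S →
      (Pr a ≥ Pr b ↔ R a b))


section Aux

variable {R : LOrder}

lemma wdiff (M : Measurement) {B A : Finset ℕ} (hBA : B ⊆ A) (hAS : A ⊆ M.S) :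
    M.W A = M.W B + M.W (A \ B) := by
  have h : B ∪ (A \ B) = A := Finset.union_sdiff_of_subset hBA
  conv_lhs => rw [← h]
  exact M.addW B (A \ B) (hBA.trans hAS) (Finset.sdiff_subset.trans hAS)
    Finset.disjoint_sdiff

lemma weight_le_one (M : Measurement) {E : Finset ℕ} (h : E ⊆ M.S) : M.W E ≤ 1 := by
  have := wdiff M h (le_refl M.S)
  have h2 := M.nonneg (M.S \ E)
  rw [M.totalW] at this
  linarith

lemma build_pair (hR : Rich) {u v : ℝ} (h0 : 0 ≤ u) (huv : u ≤ v) (h1 : v ≤ 1) :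
    ∃ (P : Measurement) (B A : Finset ℕ), B ⊆ A ∧ A ⊆ P.S ∧ P.W B = u ∧ P.W A = v := by
  rcases h0.lt_or_eq with hu | hu
  · rcases huv.lt_or_eq with hv | hv
    · rcases h1.lt_or_eq with h1' | h1'
      · -- 0 < u < v < 1 : three parts
        obtain ⟨P, e, hS, hw⟩ := hR 3 ![u, v - u, 1 - v]
          (by intro i; fin_cases i <;> simp <;> try linarith)
          (by rw [Fin.sum_univ_three]; simp; try ring)
        have hsub : ∀ i : Fin 3, ({e i} : Finset ℕ) ⊆ P.S := fun i =>
          Finset.singleton_subset_iff.mpr (hS ▸ Finset.mem_map_of_mem e (Finset.mem_univ i))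
        refine ⟨P, {e 0}, {e 0, e 1}, ?_, ?_, ?_, ?_⟩
        · intro x hx; simp only [Finset.mem_singleton] at hx
          simp [hx]
        · intro x hx
          simp only [Finset.mem_insert, Finset.mem_singleton] at hx
          rcases hx with h | h
          · exact hsub 0 (by simp [h])
          · exact hsub 1 (by simp [h])
        · rw [hw 0]; simp
        · have hne : e 0 ≠ e 1 := fun h => by simpa using e.injective h
          have hset : ({e 0, e 1} : Finset ℕ) = {e 0} ∪ {e 1} := rfl
          rw [hset, P.addW {e 0} {e 1} (hsub 0) (hsub 1) (by simp [hne]), hw 0, hw 1]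
          simp
      · -- 0 < u < v = 1 : two parts u, 1-u ; A = S
        obtain ⟨P, e, hS, hw⟩ := hR 2 ![u, 1 - u]
          (by intro i; fin_cases i <;> simp <;> try linarith)
          (by rw [Fin.sum_univ_two]; simp; try ring)
        refine ⟨P, {e 0}, P.S, ?_, le_refl _, ?_, ?_⟩
        · exact Finset.singleton_subset_iff.mpr
            (hS ▸ Finset.mem_map_of_mem e (Finset.mem_univ 0))
        · rw [hw 0]; simp
        · rw [P.totalW, h1']
    · -- 0 < u = v : B = A
      rcases h1.lt_or_eq with h1' | h1'
      · obtain ⟨P, e, hS, hw⟩ := hR 2 ![u, 1 - u]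
          (by intro i; fin_cases i <;> simp <;> try linarith)
          (by rw [Fin.sum_univ_two]; simp; try ring)
        refine ⟨P, {e 0}, {e 0}, le_refl _, ?_, ?_, ?_⟩
        · exact Finset.singleton_subset_iff.mpr
            (hS ▸ Finset.mem_map_of_mem e (Finset.mem_univ 0))
        · rw [hw 0]; simp
        · rw [hw 0]; simpa using hv
      · obtain ⟨P, e, hS, hw⟩ := hR 1 ![1] (by intro i; fin_cases i; norm_num) (by simp)
        exact ⟨P, P.S, P.S, le_refl _, le_refl _, by rw [P.totalW, ← h1', ← hv],
          by rw [P.totalW, ← h1']⟩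
  · rcases huv.lt_or_eq with hv | hv
    · rcases h1.lt_or_eq with h1' | h1'
      · -- u = 0 < v < 1
        obtain ⟨P, e, hS, hw⟩ := hR 2 ![v, 1 - v]
          (by intro i; fin_cases i <;> simp <;> try linarith)
          (by rw [Fin.sum_univ_two]; simp; try ring)
        refine ⟨P, ∅, {e 0}, Finset.empty_subset _, ?_, ?_, ?_⟩
        · exact Finset.singleton_subset_iff.mpr
            (hS ▸ Finset.mem_map_of_mem e (Finset.mem_univ 0))
        · rw [P.emptyW, hu]
        · rw [hw 0]; simp
      · obtain ⟨P, e, hS, hw⟩ := hR 1 ![1] (by intro i; fin_cases i; norm_num) (by simp)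
        exact ⟨P, ∅, P.S, Finset.empty_subset _, le_refl _, by rw [P.emptyW, hu],
          by rw [P.totalW, h1']⟩
    · obtain ⟨P, e, hS, hw⟩ := hR 1 ![1] (by intro i; fin_cases i; norm_num) (by simp)
      exact ⟨P, ∅, ∅, le_refl _, Finset.empty_subset _, by rw [P.emptyW, hu],
        by rw [P.emptyW, hu, hv]⟩

/-- A weight value that is achieved by some null event. -/
def NW (R : LOrder) (s : ℝ) : Prop :=
  ∃ (M : Measurement) (E : Finset ℕ), E ⊆ M.S ∧ M.W E = s ∧ IsNull R E M

lemma null_of_weight (hT : TransAx R) (hE : EquivalenceAx R) {s : ℝ} (h : NW R s)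
    {N : Measurement} {F : Finset ℕ} (hFS : F ⊆ N.S) (hw : N.W F = s) :
    IsNull R F N := by
  obtain ⟨M, E, hES, hEw, hEn⟩ := h
  have h1 : lequiv R (F, N) (E, M) := hE N M F E hFS hES (by rw [hw, hEw])
  have h2 : lequiv R ((∅ : Finset ℕ), M) ((∅ : Finset ℕ), N) :=
    hE M N ∅ ∅ (Finset.empty_subset _) (Finset.empty_subset _)
      (by rw [M.emptyW, N.emptyW])
  exact ⟨hT _ _ _ (hT _ _ _ h1.1 hEn.1) h2.1, hT _ _ _ (hT _ _ _ h2.2 hEn.2) h1.2⟩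

lemma null_subset (hT : TransAx R) (hD : DominanceAx R) {M : Measurement}
    {B A : Finset ℕ} (hBA : B ⊆ A) (hAS : A ⊆ M.S) (hA : IsNull R A M) :
    IsNull R B M := by
  have hd := (hD M B A hBA hAS).1
  have hd2 := (hD M ∅ B (Finset.empty_subset _) (hBA.trans hAS)).1
  exact ⟨hd2, hT _ _ _ hA.2 hd⟩

lemma null_union (hT : TransAx R) (hD : DominanceAx R) {M : Measurement}
    {A C : Finset ℕ} (hd : Disjoint A C) (hsub : A ∪ C ⊆ M.S)
    (hA : IsNull R A M) (hC : IsNull R C M) : IsNull R (A ∪ C) M := by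
  have hsubA : A ⊆ A ∪ C := Finset.subset_union_left
  have hiff := (hD M A (A ∪ C) hsubA hsub).2
  have hdiff : (A ∪ C) \ A = C := Finset.union_sdiff_cancel_left hd
  have hlequiv : lequiv R (A ∪ C, M) (A, M) := hiff.mpr (by rw [hdiff]; exact hC)
  exact ⟨hT _ _ _ hlequiv.1 hA.1, hT _ _ _ hA.2 hlequiv.2⟩

lemma null_weight_zero (hT : TransAx R) (hD : DominanceAx R) (hS : SeparationAx R)
    (hE : EquivalenceAx R) (hR : Rich) {M : Measurement} {E : Finset ℕ}
    (hES : E ⊆ M.S) (hN : IsNull R E M) : M.W E = 0 := by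
  by_contra hne
  have hs : 0 < M.W E := lt_of_le_of_ne (M.nonneg E) (Ne.symm hne)
  set s := M.W E with hsdef
  have hs1 : s ≤ 1 := weight_le_one M hES
  have hNWs : NW R s := ⟨M, E, hES, rfl, hN⟩
  have key : ∀ k : ℕ, ∀ r : ℝ, 0 < r → r ≤ k * s → r ≤ 1 → NW R r := by
    intro k
    induction k with
    | zero => intro r hr hks _; simp at hks; linarith
    | succ k ih =>
      intro r hr hks hr1
      by_cases hcase : r ≤ s
      · obtain ⟨P, B, A, hBA, hAS, hWB, hWA⟩ := build_pair hR hr.le hcase hs1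
        have hAnull : IsNull R A P := null_of_weight hT hE hNWs hAS hWA
        exact ⟨P, B, hBA.trans hAS, hWB, null_subset hT hD hBA hAS hAnull⟩
      · push_neg at hcase
        have hrs : 0 < r - s := by linarith
        have hrk : r - s ≤ k * s := by push_cast at hks ⊢; linarith
        have hNWrs : NW R (r - s) := ih (r - s) hrs hrk (by linarith)
        obtain ⟨P, B, A, hBA, hAS, hWB, hWA⟩ := build_pair hR hs.le hcase.le hr1
        have hWdiff : P.W (A \ B) = r - s := by
          have := wdiff P hBA hAS; rw [hWA, hWB] at this; linarith
        have hBnull : IsNull R B P := null_of_weight hT hE hNWs (hBA.trans hAS) hWB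
        have hDnull : IsNull R (A \ B) P :=
          null_of_weight hT hE hNWrs (Finset.sdiff_subset.trans hAS) hWdiff
        have hAeq : B ∪ (A \ B) = A := Finset.union_sdiff_of_subset hBA
        have hAnull : IsNull R A P := by
          have := null_union hT hD Finset.disjoint_sdiff
            (by rw [hAeq]; exact hAS) hBnull hDnull
          rwa [hAeq] at this
        exact ⟨P, A, hAS, hWA, hAnull⟩
  obtain ⟨E0, M0, hE0S, hE0⟩ := hS
  set t := M0.W E0 with htdef
  have ht0 : 0 < t := by
    rcases lt_or_eq_of_le (M0.nonneg E0) with h | h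
    · exact h
    · exact absurd (null_of_weight hT hE ⟨M0, ∅, Finset.empty_subset _, M0.emptyW,
        hE M0 M0 ∅ ∅ (Finset.empty_subset _) (Finset.empty_subset _) rfl⟩ hE0S
          (by rw [← h])) hE0
  have ht1 : t ≤ 1 := weight_le_one M0 hE0S
  obtain ⟨k, hk⟩ := exists_nat_ge (1 / s)
  have hks : 1 ≤ k * s := by
    rw [div_le_iff₀ hs] at hk; linarith
  exact hE0 (null_of_weight hT hE (key k t ht0 (by linarith) ht1) hE0S rfl)

end Aux

/-- Quantum representation theorem, existence: the weight function represents ≿. -/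
theorem stmt3 (R : LOrder) (hT : TransAx R) (hD : DominanceAx R)
    (hS : SeparationAx R) (hE : EquivalenceAx R) (hR : Rich) :
    Represents R (fun a => a.2.W a.1) := by
  refine ⟨fun M => M.emptyW, fun M => M.totalW, fun M E F h1 h2 h3 => M.addW E F h1 h2 h3, ?_⟩
  intro a b ha hb
  obtain ⟨E, M⟩ := a
  obtain ⟨F, N⟩ := b
  simp only at ha hb ⊢
  constructor
  · intro hge
    obtain ⟨P, B, A, hBA, hAS, hWB, hWA⟩ :=
      build_pair hR (N.nonneg F) hge (weight_le_one M ha)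
    have h1 : lequiv R (E, M) (A, P) := hE M P E A ha hAS (by rw [hWA])
    have h2 : lequiv R (B, P) (F, N) := hE P N B F (hBA.trans hAS) hb (by rw [hWB])
    have h3 := (hD P B A hBA hAS).1
    exact hT _ _ _ (hT _ _ _ h1.1 h3) h2.1
  · intro hRab
    by_contra hlt
    push_neg at hlt
    have hge : N.W F ≥ M.W E := hlt.le
    obtain ⟨P, B, A, hBA, hAS, hWB, hWA⟩ :=
      build_pair hR (M.nonneg E) hge (weight_le_one N hb)
    have h1 : lequiv R (E, M) (B, P) := hE M P E B ha (hBA.trans hAS) (by rw [hWB])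
    have h2 : lequiv R (F, N) (A, P) := hE N P F A hb hAS (by rw [hWA])
    -- also R (F,N) (E,M) from forward direction applied the other way... derive directly
    have hRba : R (A, P) (B, P) := (hD P B A hBA hAS).1
    have hRAB : lequiv R (A, P) (B, P) := by
      refine ⟨hRba, ?_⟩
      exact hT _ _ _ (hT _ _ _ h1.2 hRab) h2.1
    have hnull : IsNull R (A \ B) P := ((hD P B A hBA hAS).2).mp hRAB
    have hz : P.W (A \ B) = 0 :=
      null_weight_zero hT hD hS hE hR (Finset.sdiff_subset.trans hAS) hnull
    have := wdiff P hBA hAS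
    rw [hWA, hWB, hz] at this
    linarith
end

section
/- (Quantum Representation Theorem, uniqueness part) If a likelihood ordering on a weight-rich set of quantum measurements satisfies transitivity, dominance, separation, and equivalence, and Pr is any function representing the ordering, then Pr(E|M) = W_M(E) for every measurement M and event E of M. -/
/-!
Equivalence and representation force `Pr (E, M)` to depend only on the weight `M.W E`, and
Dominance makes it monotone in that weight. Weight-richness supplies a measurement with `n`
outcomes of weight `1 / n` each; its singletons are equally likely, so additivity and
`Pr (S, M) = 1` give every event of rational weight `q` the probability `q`. Squeezing an
arbitrary weight between rationals finishes the proof.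
-/

open Finset

theorem eq_sum_singletons_of_additive {α β : Type*} [DecidableEq α] [AddCommMonoid β]
    {S : Finset α} (f : Finset α → β) (h0 : f ∅ = 0)
    (hadd : ∀ E F, E ⊆ S → F ⊆ S → Disjoint E F → f (E ∪ F) = f E + f F) :
    ∀ E ⊆ S, f E = ∑ x ∈ E, f {x} := by
  intro E
  induction E using Finset.induction_on with
  | empty => simpa using h0
  | insert a s ha ih =>
    intro hsub
    rw [insert_subset_iff] at hsub
    rw [sum_insert ha, insert_eq, hadd _ _ (singleton_subset_iff.2 hsub.1) hsub.2
      (disjoint_singleton_left.2 ha), ih hsub.2]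

namespace Measurement

theorem W_le_one (M : Measurement) {E : Finset ℕ} (hE : E ⊆ M.S) : M.W E ≤ 1 := by
  have h := M.addW E (M.S \ E) hE sdiff_subset disjoint_sdiff
  rw [union_sdiff_of_subset hE, M.totalW] at h
  linarith [M.nonneg (M.S \ E)]

theorem W_eq_sum_singletons (M : Measurement) : ∀ E ⊆ M.S, M.W E = ∑ x ∈ E, M.W {x} :=
  eq_sum_singletons_of_additive M.W M.emptyW M.addW

end Measurement

theorem map_subset_of_eq_map {n : ℕ} {S : Finset ℕ} {e : Fin n ↪ ℕ} (hS : S = univ.map e)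
    (I : Finset (Fin n)) : I.map e ⊆ S :=
  hS ▸ map_subset_map.2 (subset_univ I)

namespace Rich

theorem exists_uniform (hR : Rich) {n : ℕ} (hn : 0 < n) :
    ∃ (M : Measurement) (e : Fin n ↪ ℕ), M.S = univ.map e ∧ ∀ i, M.W {e i} = (n : ℝ)⁻¹ :=
  hR n (fun _ => (n : ℝ)⁻¹) (fun _ => by positivity) (by simp [hn.ne'])

theorem exists_nested {u v : ℝ} (hR : Rich) (hu : 0 < u) (huv : u < v) (hv : v < 1) :
    ∃ (M : Measurement) (A B : Finset ℕ), A ⊆ B ∧ B ⊆ M.S ∧ M.W A = u ∧ M.W B = v := by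
  obtain ⟨M, e, hS, hw⟩ := hR 3 ![u, v - u, 1 - v]
    (by intro i; fin_cases i <;> simp <;> linarith)
    (by simp [Fin.sum_univ_three])
  have hW := fun I : Finset (Fin 3) => M.W_eq_sum_singletons _ (map_subset_of_eq_map hS I)
  refine ⟨M, ({0} : Finset (Fin 3)).map e, ({0, 1} : Finset (Fin 3)).map e,
    map_subset_map.2 (by simp), map_subset_of_eq_map hS _, ?_, ?_⟩
  · rw [hW, sum_map]; simp [hw]
  · rw [hW, sum_map]; simp [hw]

end Rich

namespace Represents

variable {R : LOrder} {Pr : Finset ℕ × Measurement → ℝ}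

theorem eq_sum_singletons (hPr : Represents R Pr) (M : Measurement) :
    ∀ E ⊆ M.S, Pr (E, M) = ∑ x ∈ E, Pr ({x}, M) :=
  eq_sum_singletons_of_additive (fun E => Pr (E, M)) (hPr.1 M) (hPr.2.2.1 M)

theorem mono (hPr : Represents R Pr) (hD : DominanceAx R) {M : Measurement} {E F : Finset ℕ}
    (hEF : E ⊆ F) (hF : F ⊆ M.S) : Pr (E, M) ≤ Pr (F, M) :=
  (hPr.2.2.2 (F, M) (E, M) hF (hEF.trans hF)).2 (hD M E F hEF hF).1

theorem nonneg (hPr : Represents R Pr) (hD : DominanceAx R) {M : Measurement} {E : Finset ℕ}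
    (hE : E ⊆ M.S) : 0 ≤ Pr (E, M) :=
  (hPr.1 M).symm.trans_le (hPr.mono hD (empty_subset E) hE)

theorem le_one (hPr : Represents R Pr) (hD : DominanceAx R) {M : Measurement} {E : Finset ℕ}
    (hE : E ⊆ M.S) : Pr (E, M) ≤ 1 :=
  (hPr.mono hD hE subset_rfl).trans_eq (hPr.2.1 M)

theorem eq_of_W_eq (hPr : Represents R Pr) (hE : EquivalenceAx R) {M N : Measurement}
    {E F : Finset ℕ} (hEM : E ⊆ M.S) (hFN : F ⊆ N.S) (h : M.W E = N.W F) :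
    Pr (E, M) = Pr (F, N) := by
  have ⟨hEF, hFE⟩ := hE M N E F hEM hFN h
  exact le_antisymm ((hPr.2.2.2 _ _ hFN hEM).2 hFE) ((hPr.2.2.2 _ _ hEM hFN).2 hEF)

theorem le_of_W_le (hPr : Represents R Pr) (hD : DominanceAx R) (hE : EquivalenceAx R)
    (hR : Rich) {M N : Measurement} {E F : Finset ℕ} (hEM : E ⊆ M.S) (hFN : F ⊆ N.S)
    (h : M.W E ≤ N.W F) : Pr (E, M) ≤ Pr (F, N) := by
  rcases h.eq_or_lt with h | h
  · exact (hPr.eq_of_W_eq hE hEM hFN h).le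
  rcases (M.nonneg E).eq_or_lt with h0 | h0
  · calc Pr (E, M) = Pr (∅, N) := hPr.eq_of_W_eq hE hEM (empty_subset _) (by rw [← h0, N.emptyW])
      _ = 0 := hPr.1 N
      _ ≤ Pr (F, N) := hPr.nonneg hD hFN
  rcases (N.W_le_one hFN).eq_or_lt with h1 | h1
  · calc Pr (E, M) ≤ 1 := hPr.le_one hD hEM
      _ = Pr (N.S, N) := (hPr.2.1 N).symm
      _ = Pr (F, N) := hPr.eq_of_W_eq hE subset_rfl hFN (by rw [N.totalW, h1])
  obtain ⟨K, A, B, hAB, hB, hA, hBw⟩ := hR.exists_nested h0 h h1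
  calc Pr (E, M) = Pr (A, K) := hPr.eq_of_W_eq hE hEM (hAB.trans hB) hA.symm
    _ ≤ Pr (B, K) := hPr.mono hD hAB hB
    _ = Pr (F, N) := hPr.eq_of_W_eq hE hB hFN hBw

theorem exists_eq_ratCast (hPr : Represents R Pr) (hE : EquivalenceAx R) (hR : Rich)
    {q : ℚ} (hq0 : 0 ≤ q) (hq1 : q ≤ 1) :
    ∃ (M : Measurement) (A : Finset ℕ), A ⊆ M.S ∧ M.W A = q ∧ Pr (A, M) = q := by
  obtain ⟨M, e, hS, hw⟩ := hR.exists_uniform q.den_pos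
  set k := q.num.toNat
  have hk : k ≤ q.den := by have := Rat.num_le_denom_iff.2 hq1; omega
  have hq : (q : ℝ) = k * (q.den : ℝ)⁻¹ := by
    rw [Rat.cast_def, div_eq_mul_inv, ← Int.toNat_of_nonneg (Rat.num_nonneg.2 hq0)]; rfl
  have hp : ∀ i, Pr ({e i}, M) = (q.den : ℝ)⁻¹ := by
    have hsingle : ∀ i, Pr ({e i}, M) = Pr ({e ⟨0, q.den_pos⟩}, M) := fun i =>
      hPr.eq_of_W_eq hE (by simp [hS]) (by simp [hS]) (by rw [hw, hw])
    have htotal := hPr.eq_sum_singletons M M.S subset_rfl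
    rw [hPr.2.1, hS, sum_map, sum_congr rfl fun i _ => hsingle i] at htotal
    intro i
    rw [hsingle]
    exact eq_inv_of_mul_eq_one_right (by simpa using htotal.symm)
  set A := (univ.filter fun i : Fin q.den => i.val < k).map e
  have hA : A ⊆ M.S := map_subset_of_eq_map hS _
  have hcard : (univ.filter fun i : Fin q.den => i.val < k).card = k := by
    rw [Fin.card_filter_val_lt]; omega
  refine ⟨M, A, hA, ?_, ?_⟩
  · rw [M.W_eq_sum_singletons A hA, sum_map, sum_congr rfl fun i _ => hw i]
    simp [hcard, hq]
  · rw [hPr.eq_sum_singletons M A hA, sum_map, sum_congr rfl fun i _ => hp i]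
    simp [hcard, hq]

end Represents

theorem stmt4_general (R : LOrder) (hD : DominanceAx R)
    (hE : EquivalenceAx R) (hR : Rich)
    (Pr : Finset ℕ × Measurement → ℝ) (hPr : Represents R Pr) :
    ∀ (M : Measurement) (E : Finset ℕ), E ⊆ M.S → Pr (E, M) = M.W E := by
  intro M E hEM
  have compare : ∀ q : ℚ, 0 ≤ (q : ℝ) → (q : ℝ) ≤ 1 →
      ((q : ℝ) ≤ M.W E → (q : ℝ) ≤ Pr (E, M)) ∧ (M.W E ≤ q → Pr (E, M) ≤ q) := by
    intro q hq0 hq1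
    obtain ⟨N, A, hA, hAw, hAPr⟩ :=
      hPr.exists_eq_ratCast hE hR (q := q) (by exact_mod_cast hq0) (by exact_mod_cast hq1)
    exact ⟨fun h => hAPr.symm.trans_le (hPr.le_of_W_le hD hE hR hA hEM (hAw.trans_le h)),
      fun h => (hPr.le_of_W_le hD hE hR hEM hA (h.trans_eq hAw.symm)).trans_eq hAPr⟩
  rcases lt_trichotomy (Pr (E, M)) (M.W E) with hlt | heq | hgt
  · obtain ⟨q, hq, hqw⟩ := exists_rat_btwn hlt
    have hq0 := (hPr.nonneg hD hEM).trans hq.le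
    linarith [(compare q hq0 (by linarith [M.W_le_one hEM])).1 hqw.le]
  · exact heq
  · obtain ⟨q, hqw, hq⟩ := exists_rat_btwn hgt
    have hq1 := hq.le.trans (hPr.le_one hD hEM)
    linarith [(compare q (by linarith [M.nonneg E]) hq1).2 hqw.le]

/-- Quantum representation theorem, uniqueness: any representing function is the weight. -/
theorem stmt4 (R : LOrder) (hT : TransAx R) (hD : DominanceAx R)
    (hS : SeparationAx R) (hE : EquivalenceAx R) (hR : Rich)
    (Pr : Finset ℕ × Measurement → ℝ) (hPr : Represents R Pr) :
    ∀ (M : Measurement) (E : Finset ℕ), E ⊆ M.S → Pr (E, M) = M.W E :=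
  stmt4_general R hD hE hR Pr hPr
end

section
/- Under the axioms of the quantum representation theorem (transitivity, dominance, separation, equivalence, weight-richness), the likelihood ordering is total: for any event-measurement pairs (E,M) and (F,N), either E|M ≿ F|N or F|N ≿ E|M. -/
lemma W_le_one (M : Measurement) (E : Finset ℕ) (hE : E ⊆ M.S) : M.W E ≤ 1 := by
  have h := M.addW E (M.S \ E) hE (Finset.sdiff_subset) Finset.disjoint_sdiff
  rw [Finset.union_sdiff_of_subset hE, M.totalW] at h
  nlinarith [M.nonneg (M.S \ E)]

lemma exists_nested (hR : Rich) (p q : ℝ) (hp : 0 ≤ p) (hpq : p < q) (hq : q ≤ 1) :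
    ∃ (K : Measurement) (A B : Finset ℕ),
      A ⊆ B ∧ B ⊆ K.S ∧ K.W A = p ∧ K.W B = q := by
  rcases eq_or_lt_of_le hp with hp0 | hp0
  · rcases eq_or_lt_of_le hq with hq1 | hq1
    · -- p = 0, q = 1
      obtain ⟨K, e, hKS, _⟩ := hR 1 ![1] (by intro i; fin_cases i <;> norm_num)
        (by simp)
      exact ⟨K, ∅, K.S, Finset.empty_subset _, subset_rfl,
        by rw [K.emptyW, ← hp0], by rw [K.totalW, hq1]⟩
    · -- p = 0, q < 1
      obtain ⟨K, e, hKS, hw⟩ := hR 2 ![q, 1 - q]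
        (by intro i; fin_cases i <;> simp <;> linarith)
        (by simp [Fin.sum_univ_two])
      have h0 : ({e 0} : Finset ℕ) ⊆ K.S := by
        rw [hKS]; intro x hx; simp at hx; subst hx; simp
      refine ⟨K, ∅, {e 0}, Finset.empty_subset _, h0, by rw [K.emptyW, ← hp0], ?_⟩
      have := hw 0; simpa using this
  · rcases eq_or_lt_of_le hq with hq1 | hq1
    · -- 0 < p, q = 1
      obtain ⟨K, e, hKS, hw⟩ := hR 2 ![p, 1 - p]
        (by intro i; fin_cases i <;> simp <;> linarith)
        (by simp [Fin.sum_univ_two])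
      have h0 : ({e 0} : Finset ℕ) ⊆ K.S := by
        rw [hKS]; intro x hx; simp at hx; subst hx; simp
      refine ⟨K, {e 0}, K.S, h0, subset_rfl, ?_, by rw [K.totalW, hq1]⟩
      have := hw 0; simpa using this
    · -- 0 < p, q < 1
      obtain ⟨K, e, hKS, hw⟩ := hR 3 ![p, q - p, 1 - q]
        (by intro i; fin_cases i <;> simp <;> linarith)
        (by simp [Fin.sum_univ_three])
      have h0 : ({e 0} : Finset ℕ) ⊆ K.S := by
        rw [hKS]; intro x hx; simp at hx; subst hx; simp
      have h1 : ({e 1} : Finset ℕ) ⊆ K.S := by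
        rw [hKS]; intro x hx; simp at hx; subst hx; simp
      have hne : e 0 ≠ e 1 := fun h => by
        have := e.injective h; simp at this
      have hdis : Disjoint ({e 0} : Finset ℕ) {e 1} := by
        simp [Finset.disjoint_singleton_left, hne]
      have hB : ({e 0, e 1} : Finset ℕ) = {e 0} ∪ {e 1} := rfl
      have hadd := K.addW {e 0} {e 1} h0 h1 hdis
      have hw0 := hw 0; have hw1 := hw 1
      simp at hw0 hw1
      refine ⟨K, {e 0}, {e 0, e 1}, ?_, ?_, hw0, ?_⟩
      · intro x hx; simp at hx; subst hx; simp
      · rw [hB]; exact Finset.union_subset h0 h1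
      · rw [hB, hadd, hw0, hw1]; ring

lemma key_le (R : LOrder) (hT : TransAx R) (hD : DominanceAx R)
    (hE : EquivalenceAx R) (hR : Rich)
    (M N : Measurement) (E F : Finset ℕ) (hEM : E ⊆ M.S) (hFN : F ⊆ N.S)
    (h : M.W E ≤ N.W F) : R (F, N) (E, M) := by
  rcases eq_or_lt_of_le h with heq | hlt
  · exact (hE M N E F hEM hFN heq).2
  · obtain ⟨K, A, B, hAB, hBK, hA, hB⟩ :=
      exists_nested hR (M.W E) (N.W F) (M.nonneg E) hlt (W_le_one N F hFN)
    have h1 : lequiv R (E, M) (A, K) := hE M K E A hEM (hAB.trans hBK) hA.symm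
    have h2 : lequiv R (F, N) (B, K) := hE N K F B hFN hBK hB.symm
    have h3 : R (B, K) (A, K) := (hD K A B hAB hBK).1
    exact hT _ _ _ (hT _ _ _ h2.1 h3) h1.2

/-- The likelihood ordering is total under the representation-theorem axioms. -/
theorem stmt8 (R : LOrder) (hT : TransAx R) (hD : DominanceAx R)
    (hS : SeparationAx R) (hE : EquivalenceAx R) (hR : Rich)
    (M N : Measurement) (E F : Finset ℕ) (hEM : E ⊆ M.S) (hFN : F ⊆ N.S) :
    R (E, M) (F, N) ∨ R (F, N) (E, M) := by
  rcases le_total (M.W E) (N.W F) with h | h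
  · exact Or.inr (key_le R hT hD hE hR M N E F hEM hFN h)
  · exact Or.inl (key_le R hT hD hE hR N M F E hFN hEM h)
end
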